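/- Conditional one-step improvement with a random improvement mass (unconditional bound via expectation): let (Ω, 𝓕, ℙ) be a probability space, m a sub-σ-algebra of 𝓕, λ ∈ ℕ with λ ≥ 1, Q : Ω → [0,1] an m-measurable random variable, and B_1, …, B_λ measurable events that are conditionally independent given m and satisfy 𝔼[1_{B_n} ∣ m] ≥ Q almost surely for every n. Then ℙ(B_1 ∪ ⋯ ∪ B_λ) ≥ 𝔼[1 − (1 − Q)^λ]. -/

import Mathlib

open MeasureTheory ProbabilityTheory


lemma sap_aux_ind_int {Ω : Type*} {mΩ : MeasurableSpace Ω} (μ : MeasureTheory.Measure Ω)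
    [MeasureTheory.IsFiniteMeasure μ] {s : Set Ω} (hs : MeasurableSet s) :
    MeasureTheory.Integrable (s.indicator fun _ => (1 : ℝ)) μ :=
  (MeasureTheory.integrable_const 1).indicator hs

lemma sap_aux_meas_toReal {Ω : Type*} {mΩ : MeasurableSpace Ω} (μ : MeasureTheory.Measure Ω)
    {s : Set Ω} (hs : MeasurableSet s) :
    (μ s).toReal = ∫ ω, s.indicator (fun _ => (1 : ℝ)) ω ∂μ := by
  exact (MeasureTheory.integral_indicator_one hs).symm

lemma sap_aux_int_const {Ω : Type*} {mΩ : MeasurableSpace Ω} (μ : MeasureTheory.Measure Ω)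
    [MeasureTheory.IsFiniteMeasure μ] :
    MeasureTheory.Integrable (fun _ : Ω => (1 : ℝ)) μ :=
  MeasureTheory.integrable_const 1

lemma sap_aux_integral_condexp {Ω : Type*} {m m0 : MeasurableSpace Ω} (hm : m ≤ m0)
    (μ : @MeasureTheory.Measure Ω m0) [MeasureTheory.IsFiniteMeasure μ] (f : Ω → ℝ) :
    ∫ x, (μ[f|m]) x ∂μ = ∫ x, f x ∂μ :=
  MeasureTheory.integral_condExp hm

/-- Conditional one-step improvement with a random improvement mass: if
`B 1, …, B L` are conditionally independent events given a sub-σ-algebra `m`, and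
each has conditional probability at least `Q` almost surely, where `Q : Ω → [0,1]`
is `m`-measurable, then `ℙ(⋃ n, B n) ≥ 𝔼[1 - (1 - Q)^L]`. -/
theorem sap_conditional_improvement_random_mass {Ω : Type*} (m : MeasurableSpace Ω) [m0 : MeasurableSpace Ω]
    [StandardBorelSpace Ω] (μ : Measure Ω) [IsProbabilityMeasure μ]
    (hm : m ≤ m0)
    (L : ℕ) (hL : 1 ≤ L)
    (Q : Ω → ℝ) (hQmeas : Measurable[m] Q)
    (hQ0 : ∀ ω, 0 ≤ Q ω) (hQ1 : ∀ ω, Q ω ≤ 1)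
    (B : Fin L → Set Ω) (hBmeas : ∀ n, MeasurableSet (B n))
    (hBcondindep : iCondIndepSet m hm B μ)
    (hBQ : ∀ n, ∀ᵐ ω ∂μ, Q ω ≤ (μ[(B n).indicator (fun _ => (1 : ℝ)) | m]) ω) :
    ENNReal.ofReal (∫ ω, (1 - (1 - Q ω) ^ L) ∂μ) ≤ μ (⋃ n, B n) := by
  -- the complement intersection
  set C : Set Ω := ⋂ i, (B i)ᶜ with hC_def
  have hBm0 : ∀ n, MeasurableSet[m0] (B n) := fun n => hBmeas n
  have hCmeas : MeasurableSet[m0] C := MeasurableSet.iInter fun i => (hBm0 i).compl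
  have hQm0 : Measurable[m0] Q := hQmeas.mono hm le_rfl
  -- conditional independence in generateFrom form
  have hI : iCondIndep m hm (fun i => MeasurableSpace.generateFrom {B i}) μ :=
    (iCondIndepSet_iff_iCondIndep m hm B μ).mp hBcondindep
  have hgen : ∀ i, MeasurableSpace.generateFrom {B i} ≤ m0 := fun i =>
    MeasurableSpace.generateFrom_le (by rintro t rfl; exact hBm0 i)
  have key : (μ⟦⋂ i ∈ Finset.univ, (B i)ᶜ | m⟧)
      =ᵐ[μ] ∏ i ∈ Finset.univ, (μ⟦(B i)ᶜ | m⟧) :=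
    (iCondIndep_iff m hm (fun i => MeasurableSpace.generateFrom {B i}) hgen μ).mp hI
      Finset.univ (fun i _ =>
        (MeasurableSpace.measurableSet_generateFrom (Set.mem_singleton _)).compl)
  have hUniv : (⋂ i ∈ Finset.univ, (B i)ᶜ) = C := by simp [hC_def]
  rw [hUniv] at key
  -- each conditional complement probability is 1 - conditional probability
  have hcompl : ∀ i : Fin L, (μ⟦(B i)ᶜ | m⟧)
      =ᵐ[μ] fun ω => 1 - (μ⟦B i | m⟧) ω := by
    intro i
    have heq : ((B i)ᶜ).indicator (fun _ => (1 : ℝ))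
        = fun ω => (1 : ℝ) - (B i).indicator (fun _ => (1 : ℝ)) ω := by
      funext ω
      by_cases h : ω ∈ B i <;> simp [Set.indicator_apply, h]
    calc (μ⟦(B i)ᶜ | m⟧)
        = μ[fun ω => (1 : ℝ) - (B i).indicator (fun _ => (1 : ℝ)) ω | m] := by rw [heq]
      _ =ᵐ[μ] fun ω => (μ[fun _ => (1:ℝ) | m]) ω - (μ⟦B i | m⟧) ω :=
          condExp_sub (sap_aux_int_const μ) (sap_aux_ind_int μ (hBm0 i)) m
      _ =ᵐ[μ] fun ω => 1 - (μ⟦B i | m⟧) ω := by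
          refine Filter.Eventually.of_forall fun ω => ?_
          simp only []
          rw [congrFun (condExp_const (μ := μ) hm (1 : ℝ)) ω]
  -- each conditional probability is ≤ 1 a.e.
  have hle1 : ∀ i : Fin L, (μ⟦B i | m⟧) ≤ᵐ[μ] fun _ => (1 : ℝ) := by
    intro i
    have : (μ⟦B i | m⟧) ≤ᵐ[μ] μ[fun _ => (1:ℝ) | m] :=
      condExp_mono (sap_aux_ind_int μ (hBm0 i)) (sap_aux_int_const μ)
        (Filter.Eventually.of_forall fun ω => by
          by_cases h : ω ∈ B i <;> simp [Set.indicator_apply, h])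
    filter_upwards [this] with ω h1
    rw [congrFun (condExp_const (μ := μ) hm (1 : ℝ)) ω] at h1; exact h1
  -- a.e. bound: conditional probability of C ≤ (1-Q)^L
  have hbound : (μ⟦C | m⟧) ≤ᵐ[μ] fun ω => (1 - Q ω) ^ L := by
    have hall : ∀ᵐ ω ∂μ, ∀ i : Fin L,
        (μ⟦(B i)ᶜ | m⟧) ω = 1 - (μ⟦B i | m⟧) ω ∧
        (μ⟦B i | m⟧) ω ≤ 1 ∧ Q ω ≤ (μ⟦B i | m⟧) ω := by
      rw [MeasureTheory.ae_all_iff]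
      intro i
      filter_upwards [hcompl i, hle1 i, hBQ i] with ω h1 h2 h3 using ⟨h1, h2, h3⟩
    filter_upwards [key, hall] with ω hkey hallω
    rw [hkey, Finset.prod_apply]
    calc (∏ i : Fin L, (μ⟦(B i)ᶜ | m⟧) ω)
        ≤ ∏ i : Fin L, (1 - Q ω) := by
          apply Finset.prod_le_prod
          · intro i _
            rw [(hallω i).1]
            linarith [(hallω i).2.1]
          · intro i _
            rw [(hallω i).1]
            linarith [(hallω i).2.2]
      _ = (1 - Q ω) ^ L := by simp
  -- integrability of (1-Q)^L
  have hIntPow : Integrable (fun ω => (1 - Q ω) ^ L) μ := by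
    refine (integrable_const (1 : ℝ)).mono'
      ((measurable_const.sub hQm0).pow_const L).aestronglyMeasurable
      (Filter.Eventually.of_forall fun ω => ?_)
    rw [Real.norm_eq_abs, abs_pow, abs_of_nonneg (by linarith [hQ1 ω])]
    exact pow_le_one₀ (by linarith [hQ1 ω]) (by linarith [hQ0 ω])
  -- ∫ (1-Q)^L bounds (μ C).toReal
  have hInt : (μ C).toReal ≤ ∫ ω, (1 - Q ω) ^ L ∂μ := by
    have h1 : (μ C).toReal = ∫ ω, C.indicator (fun _ => (1:ℝ)) ω ∂μ :=
      sap_aux_meas_toReal μ hCmeas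
    have h2 : ∫ ω, C.indicator (fun _ => (1:ℝ)) ω ∂μ = ∫ ω, (μ⟦C | m⟧) ω ∂μ :=
      (sap_aux_integral_condexp hm μ _).symm
    rw [h1, h2]
    exact integral_mono_ae integrable_condExp hIntPow hbound
  have hr0 : 0 ≤ ∫ ω, (1 - Q ω) ^ L ∂μ :=
    integral_nonneg fun ω => pow_nonneg (by linarith [hQ1 ω]) L
  have hr1 : ∫ ω, (1 - Q ω) ^ L ∂μ ≤ 1 := by
    calc ∫ ω, (1 - Q ω) ^ L ∂μ ≤ ∫ _ω, (1:ℝ) ∂μ := by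
          refine integral_mono_ae hIntPow (integrable_const 1)
            (Filter.Eventually.of_forall fun ω => ?_)
          exact pow_le_one₀ (by linarith [hQ1 ω]) (by linarith [hQ0 ω])
      _ = 1 := by simp
  -- split the integral
  have hsplit : ∫ ω, (1 - (1 - Q ω) ^ L) ∂μ = 1 - ∫ ω, (1 - Q ω) ^ L ∂μ := by
    rw [integral_sub (integrable_const 1) hIntPow]
    simp
  -- complement identity
  have hUC : (⋃ n, B n) = Cᶜ := by simp [hC_def]
  have hμU : μ (⋃ n, B n) = 1 - μ C := by
    rw [hUC, measure_compl hCmeas (measure_ne_top μ C), measure_univ]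
  rw [hsplit, hμU]
  have hμC_le : μ C ≤ ENNReal.ofReal (∫ ω, (1 - Q ω) ^ L ∂μ) := by
    rw [← ENNReal.ofReal_toReal (measure_ne_top μ C)]
    exact ENNReal.ofReal_le_ofReal hInt
  calc ENNReal.ofReal (1 - ∫ ω, (1 - Q ω) ^ L ∂μ)
      = 1 - ENNReal.ofReal (∫ ω, (1 - Q ω) ^ L ∂μ) := by
        rw [ENNReal.ofReal_sub 1 hr0, ENNReal.ofReal_one]
    _ ≤ 1 - μ C := tsub_le_tsub_left hμC_le 1
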